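/- Let H be a finite abelian group, k ≥ 1, 0 ≤ j ≤ k, and let a be an irreducible character of Equiv.Perm (Fin k). Then the restriction to H_j × H_{k−j} of the class function ζ_a on H_k decomposes as Res^{H_k}_{H_j × H_{k−j}}(ζ_a) = Σ_{b ∈ Irr(S_j)} Σ_{c ∈ Irr(S_{k−j})} c^a_{b,c} · (ζ_b ⊠ ζ_c), where c^a_{b,c} = ⟨a, Ind_{S_j × S_{k−j}}^{S_k}(b ⊠ c)⟩_{S_k} is the Littlewood–Richardson coefficient. -/

import Mathlib

/-!
On `H_j × H_{k−j}` the class function `ζ_a` only sees the permutation components, so the claim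
is the expansion of the class function `a ∘ (S_j × S_{k−j} ↪ S_k)` in the products `b ⊠ c` of
irreducible characters, with the coefficients rewritten by Frobenius reciprocity.

The expansion rests on completeness of the irreducible characters among class functions. If a
class function `f` on a finite group `G` is orthogonal to every irreducible character, then on
each irreducible representation `ρ` the operator `∑ g, f g⁻¹ • ρ g` intertwines `ρ`, hence is a
scalar (Schur), and its trace `|G| ⟨f, χ_ρ⟩` vanishes, so it is zero. Applied to the simple left
ideals of the semisimple algebra `ℂ[G]`, this kills `z = ∑ g, f g⁻¹ • g`, whence `f = 0`. For
`G₁ × G₂`, completeness in each factor gives completeness of the products `b ⊠ c`.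
-/

open scoped Classical

noncomputable section

namespace BrGrFormal

/-! ### The groups `H = (ZMod p)ˣ` and `G = ZMod p ⋊ (ZMod p)ˣ` -/

/-- The action of `(ZMod p)ˣ` on the (multiplicatively written) additive group `ZMod p`,
by multiplication. -/
def mulAction (p : ℕ) : (ZMod p)ˣ →* MulAut (Multiplicative (ZMod p)) where
  toFun u :=
    { toFun := fun z => Multiplicative.ofAdd (u • z.toAdd)
      invFun := fun z => Multiplicative.ofAdd (u⁻¹ • z.toAdd)
      left_inv := fun z => by simp
      right_inv := fun z => by simp
      map_mul' := fun z w => by simp [toAdd_mul, smul_add, ofAdd_add] }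
  map_one' := by ext z; simp
  map_mul' := fun u v => by ext z; simp [mul_smul]

/-- The group `G = ZMod p ⋊ (ZMod p)ˣ`. -/
abbrev Gp (p : ℕ) := Multiplicative (ZMod p) ⋊[mulAction p] (ZMod p)ˣ

instance {N G : Type*} [Group N] [Group G] {φ : G →* MulAut N} [Fintype N] [Fintype G] :
    Fintype (N ⋊[φ] G) :=
  Fintype.ofEquiv (N × G)
    { toFun := fun x => ⟨x.1, x.2⟩
      invFun := fun g => (g.left, g.right)
      left_inv := fun _ => rfl
      right_inv := fun _ => rfl }

/-! ### Characters -/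

/-- `χ : G → ℂ` is an irreducible (complex) character of the group `G` if it is the
character of some irreducible (simple) finite-dimensional complex representation of `G`. -/
def IsIrrChar (G : Type) [Group G] (χ : G → ℂ) : Prop :=
  ∃ V : FDRep ℂ G, CategoryTheory.Simple V ∧ χ = fun g => V.character g

/-- The usual inner product of class functions on a finite group. -/
def cfInner (Γ : Type) [Group Γ] [Fintype Γ] (u v : Γ → ℂ) : ℂ :=
  (Fintype.card Γ : ℂ)⁻¹ * ∑ g : Γ, u g * (starRingEnd ℂ) (v g)

/-- Induction of a class function along an (injective) group homomorphism `φ : K →* Γ`: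
`Ind_K^Γ ψ (g) = |K|⁻¹ ∑_{x ∈ Γ} ∑_{y ∈ K, φ y = x⁻¹gx} ψ (y)`. -/
def indHom {K Γ : Type} [Group K] [Fintype K] [Group Γ] [Fintype Γ]
    (φ : K →* Γ) (ψ : K → ℂ) : Γ → ℂ :=
  fun g => (Fintype.card K : ℂ)⁻¹ * ∑ x : Γ, ∑ y : K, if φ y = x⁻¹ * g * x then ψ y else 0

/-- Induction of a class function from a subgroup:
`Ind_K^Γ ψ (g) = |K|⁻¹ ∑_{x ∈ Γ, x⁻¹gx ∈ K} ψ (x⁻¹gx)`. -/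
def indSub {Γ : Type} [Group Γ] [Fintype Γ] (K : Subgroup Γ) (ψ : Γ → ℂ) : Γ → ℂ :=
  fun g => (Nat.card K : ℂ)⁻¹ * ∑ x : Γ, if x⁻¹ * g * x ∈ K then ψ (x⁻¹ * g * x) else 0

/-! ### Wreath products -/

/-- The permutation action on the base group of a wreath product. -/
def permAut (N : Type) [Group N] (k : ℕ) : Equiv.Perm (Fin k) →* MulAut (Fin k → N) where
  toFun σ :=
    { toFun := fun f => f ∘ σ.symm
      invFun := fun f => f ∘ σ
      left_inv := fun f => by ext j; simp
      right_inv := fun f => by ext j; simp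
      map_mul' := fun f g => rfl }
  map_one' := by ext f j; rfl
  map_mul' := fun σ τ => by ext f j; rfl

/-- The wreath product `N ≀ S_k`. -/
abbrev Wr (N : Type) [Group N] (k : ℕ) := (Fin k → N) ⋊[permAut N k] Equiv.Perm (Fin k)

/-- The map between wreath products induced by a homomorphism of base groups. -/
def wrMap {N M : Type} [Group N] [Group M] (ν : N →* M) (k : ℕ) : Wr N k →* Wr M k where
  toFun g := ⟨fun j => ν (g.left j), g.right⟩
  map_one' := by ext j <;> simp [permAut]
  map_mul' := fun a b => by ext j <;> simp [permAut, -SemidirectProduct.mk_eq_inl_mul_inr] <;> rfl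

/-- The set of minimal representatives of the orbits (cycles) of a permutation;
its cardinality is the number `c(π)` of orbits of `π`, fixed points included. -/
def orbitReps {k : ℕ} (π : Equiv.Perm (Fin k)) : Finset (Fin k) :=
  Finset.univ.filter fun x => ∀ y : Fin k, π.SameCycle x y → x ≤ y

/-- The orbit of `x` under (the cyclic group generated by) `π`, as a finset. -/
def orbitOf {k : ℕ} (π : Equiv.Perm (Fin k)) (x : Fin k) : Finset (Fin k) :=
  Finset.univ.filter fun y => π.SameCycle x y

/-- The cycle product `f j * f (π⁻¹ j) * ⋯ * f (π^{-(m-1)} j)` of `(f ; π)` along the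
orbit of `j`, where `m` is the cardinality of this orbit. -/
def cycleProd {N : Type} [Group N] {k : ℕ} (f : Fin k → N) (π : Equiv.Perm (Fin k))
    (j : Fin k) : N :=
  (((List.range (orbitOf π j).card)).map fun t => f ((π ^ t)⁻¹ j)).prod

/-- The class function `ψ̃^k` on `N ≀ S_k` attached to a class function `ψ` on `N`:
`(f ; π) ↦ ∏_{orbits O of π} ψ (cycle product of (f;π) along O)`. -/
def cycleCF {N : Type} [Group N] {k : ℕ} (ψ : N → ℂ) : Wr N k → ℂ :=
  fun g => ∏ x ∈ orbitReps g.right, ψ (cycleProd g.left g.right x)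

/-- The linear character `ψ̃^k : (f;π) ↦ ∏_j ψ (f j)` of `N ≀ S_k` attached to a linear
character `ψ` of `N`. -/
def prodCF {N : Type} [Group N] {k : ℕ} (ψ : N → ℂ) : Wr N k → ℂ :=
  fun g => ∏ j, ψ (g.left j)

/-- The linear character `θ̃^k : (f;π) ↦ θ (∏_j f j)` of `N ≀ S_k` attached to a linear
character `θ` of an abelian group `N`; it coincides with `prodCF θ`. -/
def thetaTilde {N : Type} [CommGroup N] {k : ℕ} (θ : N → ℂ) : Wr N k → ℂ :=
  fun g => θ (∏ j, g.left j)

/-- The class function `(f;π) ↦ a (π)` on `N ≀ S_k` attached to a class function `a`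
on `S_k` (denoted `φ_a`, resp. `ζ_a`, in the paper). -/
def permCF {N : Type} [Group N] {k : ℕ} (a : Equiv.Perm (Fin k) → ℂ) : Wr N k → ℂ :=
  fun g => a g.right

/-! ### Block (Young-type) embeddings -/

/-- Conjugation of permutations by an equivalence, as a group homomorphism. -/
def permCongrHom {α β : Type} (e : α ≃ β) : Equiv.Perm α →* Equiv.Perm β where
  toFun σ := e.permCongr σ
  map_one' := by ext x; simp
  map_mul' := fun σ τ => by ext x; simp

/-- The embedding `S_{j₁} × S_{j₂} →* S_k` determined by an identification
`E : Fin j₁ ⊕ Fin j₂ ≃ Fin k`. -/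
def permSumEmb {j₁ j₂ k : ℕ} (E : Fin j₁ ⊕ Fin j₂ ≃ Fin k) :
    Equiv.Perm (Fin j₁) × Equiv.Perm (Fin j₂) →* Equiv.Perm (Fin k) :=
  (permCongrHom E).comp (Equiv.Perm.sumCongrHom (Fin j₁) (Fin j₂))

/-- The embedding `∏ i, S_{k i} →* S_w` determined by an identification
`E : (Σ i, Fin (k i)) ≃ Fin w`. -/
def permSigmaEmb {ι : Type} [Fintype ι] [DecidableEq ι] {k : ι → ℕ} {w : ℕ}
    (E : (Σ i, Fin (k i)) ≃ Fin w) :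
    (∀ i, Equiv.Perm (Fin (k i))) →* Equiv.Perm (Fin w) :=
  (permCongrHom E).comp (Equiv.Perm.sigmaCongrRightHom fun i => Fin (k i))

private lemma permCongr_symm_eq {α β : Type} (e : α ≃ β) (p : Equiv.Perm α) :
    (e.permCongr p).symm = e.permCongr p.symm := rfl

/-- The embedding `(N ≀ S_{j₁}) × (N ≀ S_{j₂}) →* N ≀ S_k` determined by an
identification `E : Fin j₁ ⊕ Fin j₂ ≃ Fin k`. -/
def wrSumEmb {N : Type} [Group N] {j₁ j₂ k : ℕ} (E : Fin j₁ ⊕ Fin j₂ ≃ Fin k) :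
    Wr N j₁ × Wr N j₂ →* Wr N k where
  toFun x := ⟨fun t => Sum.elim x.1.left x.2.left (E.symm t),
              permSumEmb E (x.1.right, x.2.right)⟩
  map_one' := by
    ext t
    · rcases h : E.symm t with s | s <;> simp [h]
    · simp [permSumEmb, permCongrHom]
  map_mul' := fun a b => by
    ext t
    · rw [SemidirectProduct.mul_left]
      simp only [SemidirectProduct.mul_left, permAut, permSumEmb, permCongrHom,
        Equiv.Perm.sumCongrHom, MonoidHom.coe_comp, MonoidHom.coe_mk, OneHom.coe_mk,
        Function.comp_apply, Pi.mul_apply, MulEquiv.coe_mk, Equiv.coe_fn_mk,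
        MonoidHom.comp_apply, Equiv.Perm.inv_def, permCongr_symm_eq,
        Equiv.permCongr_apply, Equiv.symm_apply_apply]
      rcases h : E.symm t with s | s <;> simp [h, -SemidirectProduct.mk_eq_inl_mul_inr] <;> rfl
    · simp only [SemidirectProduct.mul_right, Prod.fst_mul, Prod.snd_mul,
        ← Prod.mk_mul_mk, map_mul]

/-- The embedding `∏ i, (N ≀ S_{k i}) →* N ≀ S_w` determined by an identification
`E : (Σ i, Fin (k i)) ≃ Fin w`. -/
def wrSigmaEmb {N : Type} [Group N] {ι : Type} [Fintype ι] [DecidableEq ι] {k : ι → ℕ}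
    {w : ℕ} (E : (Σ i, Fin (k i)) ≃ Fin w) : (∀ i, Wr N (k i)) →* Wr N w where
  toFun x := ⟨fun t => (x (E.symm t).1).left (E.symm t).2,
              permSigmaEmb E fun i => (x i).right⟩
  map_one' := by
    refine SemidirectProduct.ext ?_ ?_
    · funext t; simp
    · show (permSigmaEmb E fun i => (1 : Wr N (k i)).right) = (1 : Wr N w).right
      have h1 : (fun i => (1 : Wr N (k i)).right) = (1 : ∀ i, Equiv.Perm (Fin (k i))) := rfl
      rw [h1, map_one]
      rfl
  map_mul' := fun a b => by
    refine SemidirectProduct.ext ?_ ?_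
    · simp only [SemidirectProduct.mul_left]
      funext t
      simp only [SemidirectProduct.mul_left, permAut, permSigmaEmb, permCongrHom,
        Equiv.Perm.sigmaCongrRightHom, MonoidHom.coe_comp, MonoidHom.coe_mk, OneHom.coe_mk,
        Function.comp_apply, Pi.mul_apply, MulEquiv.coe_mk, Equiv.coe_fn_mk,
        MonoidHom.comp_apply, Equiv.Perm.inv_def, permCongr_symm_eq,
        Equiv.permCongr_apply, Equiv.sigmaCongrRight_symm,
        Equiv.sigmaCongrRight_apply]
      exact congrArg ((a (E.symm t).1).left (E.symm t).2 * ·)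
        (congrArg (fun z : (Σ i, Fin (k i)) => (b z.1).left z.2) 
          (E.symm_apply_apply
            ((Equiv.sigmaCongrRight fun i => Equiv.symm (a i).right) (E.symm t))).symm)
    · show (permSigmaEmb E fun i => ((a * b) i).right) = _
      have h1 : (fun i => ((a * b) i).right)
          = (fun i => (a i).right) * (fun i => (b i).right) := by
        funext i; simp
      rw [h1, map_mul]
      rfl

end BrGrFormal
namespace BrGrFormal

open Module
open scoped MonoidAlgebra

section Trace
variable {V : Type*} [AddCommGroup V] [Module ℂ V] [FiniteDimensional ℂ V]

theorem trace_eq_sum_smul_finrank_eigenspace {u w : End ℂ V} (hu : u.IsSemisimple) (φ : ℂ → ℂ)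
    (hw : ∀ μ, ∀ x ∈ u.eigenspace μ, w x = φ μ • x) :
    LinearMap.trace ℂ V w =
      ∑ μ ∈ u.finite_hasEigenvalue.toFinset, φ μ * finrank ℂ (u.eigenspace μ) := by
  have hint : DirectSum.IsInternal u.eigenspace :=
    DirectSum.isInternal_submodule_of_iSupIndep_of_iSup_eq_top u.eigenspaces_iSupIndep
      hu.iSup_eigenspace_eq_top
  have hmaps : ∀ μ, Set.MapsTo w (u.eigenspace μ) (u.eigenspace μ) := fun μ x hx => by
    rw [SetLike.mem_coe, hw μ x hx]
    exact Submodule.smul_mem _ _ hx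
  rw [LinearMap.trace_eq_sum_trace_restrict' hint u.finite_hasEigenvalue hmaps]
  refine Finset.sum_congr rfl fun μ _ => ?_
  have hrestrict : w.restrict (hmaps μ) = φ μ • LinearMap.id := by
    ext ⟨x, hx⟩
    exact hw μ x hx
  rw [hrestrict, map_smul, LinearMap.trace_id, smul_eq_mul]

theorem star_trace_eq_trace_of_pow_eq_one {u w : End ℂ V} {n : ℕ} (hn : n ≠ 0)
    (hun : u ^ n = 1) (hwu : w * u = 1) :
    starRingEnd ℂ (LinearMap.trace ℂ V u) = LinearMap.trace ℂ V w := by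
  have hu : u.IsSemisimple := by
    refine End.isSemisimple_of_squarefree_aeval_eq_zero
      (Polynomial.X_pow_sub_one_separable_iff.mpr (by exact_mod_cast hn)).squarefree ?_
    simp [hun]
  have hw : ∀ μ, ∀ x ∈ u.eigenspace μ, w x = μ⁻¹ • x := fun μ x hx => by
    have hx' : x = μ • w x := by
      rw [← map_smul, ← End.mem_eigenspace_iff.mp hx, ← End.mul_apply, hwu, End.one_apply]
    rcases eq_or_ne μ 0 with rfl | hμ
    · rw [hx']
      simp
    · rw [hx', smul_smul, inv_mul_cancel₀ hμ, one_smul, ← hx']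
  rw [trace_eq_sum_smul_finrank_eigenspace hu id fun μ x hx => End.mem_eigenspace_iff.mp hx,
    trace_eq_sum_smul_finrank_eigenspace hu (·⁻¹) hw, map_sum]
  refine Finset.sum_congr rfl fun μ hμ => ?_
  obtain ⟨v, hv⟩ := (Set.Finite.mem_toFinset _).mp hμ |>.exists_hasEigenvector
  have hμn : μ ^ n = 1 := smul_left_injective ℂ hv.2 (by simpa [hun] using (hv.pow_apply n).symm)
  rw [map_mul, Complex.conj_natCast, id,
    ← Complex.inv_eq_conj (Complex.norm_eq_one_of_pow_eq_one hμn hn)]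

end Trace

section OfModule
variable {k G M : Type*} [Field k] [Monoid G] [AddCommGroup M] [Module k M] [Module k[G] M]
  [IsScalarTower k k[G] M]

theorem ofModule'_apply (g : G) (x : M) :
    Representation.ofModule' (k := k) M g x = MonoidAlgebra.of k G g • x := by
  simp [Representation.ofModule']

theorem isIrreducible_ofModule' [IsSimpleModule k[G] M] :
    (Representation.ofModule' (k := k) (G := G) M).IsIrreducible := by
  rw [Representation.irreducible_iff_isSimpleModule_asModule]
  let ρ := Representation.ofModule' (k := k) (G := G) M
  let e : M ≃ₗ[k[G]] ρ.asModule :=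
    { ρ.asModuleEquiv.symm with
      map_smul' := fun r x => by
        change ρ.asModuleEquiv.symm (r • x) = r • ρ.asModuleEquiv.symm x
        rw [LinearEquiv.symm_apply_eq, Representation.asModuleEquiv_map_smul,
          LinearEquiv.apply_symm_apply, Representation.asAlgebraHom_def]
        simp [ρ, Representation.ofModule'] }
  exact IsSimpleModule.congr e.symm

end OfModule

def IsClassFun {G α : Type*} [Group G] (f : G → α) : Prop :=
  ∀ g h : G, f (h * g * h⁻¹) = f g

theorem IsIrrChar.isClassFun {G : Type} [Group G] {χ : G → ℂ} (hχ : IsIrrChar G χ) :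
    IsClassFun χ := by
  obtain ⟨V, -, rfl⟩ := hχ
  exact FDRep.char_conj V

section FiniteGroup
open CategoryTheory
variable {G : Type} [Group G] [Fintype G]

theorem star_character {V : Type*} [AddCommGroup V] [Module ℂ V] [FiniteDimensional ℂ V]
    (ρ : Representation ℂ G V) (g : G) :
    starRingEnd ℂ (ρ.character g) = ρ.character g⁻¹ :=
  star_trace_eq_trace_of_pow_eq_one Fintype.card_ne_zero
    (by rw [← map_pow, pow_card_eq_one, map_one]) (by rw [← map_mul, inv_mul_cancel, map_one])

theorem isIrrChar_character {V : Type} [AddCommGroup V] [Module ℂ V] [FiniteDimensional ℂ V]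
    (ρ : Representation ℂ G V) [ρ.IsIrreducible] : IsIrrChar G ρ.character := by
  refine ⟨FDRep.of ρ, ?_, rfl⟩
  have : Invertible (Nat.card G : ℂ) := invertibleOfNonzero (NeZero.ne _)
  have h := ρ.char_orthonormal ρ
  rw [if_pos ⟨Representation.Equiv.refl ρ⟩, inv_mul_eq_one₀ (NeZero.ne _)] at h
  exact (FDRep.simple_iff_char_is_norm_one _).mpr h.symm

theorem cfInner_character_eq_ite (V W : FDRep ℂ G) [Simple V] [Simple W] :
    cfInner G V.character W.character = if Nonempty (V ≅ W) then 1 else 0 := by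
  have : Invertible (Nat.card G : ℂ) := invertibleOfNonzero (NeZero.ne _)
  rw [← FDRep.char_orthonormal V W, cfInner, Nat.card_eq_fintype_card]
  exact congrArg _ (Finset.sum_congr rfl fun g _ => congrArg _ (star_character W.ρ g))

theorem cfInner_eq_ite_of_isIrrChar {χ ψ : G → ℂ} (hχ : IsIrrChar G χ) (hψ : IsIrrChar G ψ) :
    cfInner G χ ψ = if χ = ψ then 1 else 0 := by
  obtain ⟨V, hV, rfl⟩ := hχ
  obtain ⟨W, hW, rfl⟩ := hψ
  change cfInner G V.character W.character = if V.character = W.character then 1 else 0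
  rw [cfInner_character_eq_ite]
  by_cases hVW : Nonempty (V ≅ W)
  · rw [if_pos hVW, if_pos (FDRep.char_iso hVW.some)]
  · refine (if_neg hVW).trans (if_neg fun hchar => ?_).symm
    have h := cfInner_character_eq_ite V W
    rw [← hchar, cfInner_character_eq_ite, if_pos ⟨Iso.refl V⟩, if_neg hVW] at h
    exact one_ne_zero h

theorem sum_smul_eq_zero_of_cfInner_eq_zero {V : Type*} [AddCommGroup V] [Module ℂ V]
    [FiniteDimensional ℂ V] (ρ : Representation ℂ G V) [ρ.IsIrreducible] {f : G → ℂ}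
    (hf : IsClassFun f) (h : cfInner G f ρ.character = 0) :
    ∑ g, f g⁻¹ • ρ g = 0 := by
  let T : ρ.IntertwiningMap ρ := (∑ g, f g⁻¹ • ρ g).intertwiningMap_of_isIntertwiningMap ρ ρ
    fun h v => by
      simp only [LinearMap.coe_sum, Finset.sum_apply, LinearMap.smul_apply, map_sum, map_smul]
      simp only [← Module.End.mul_apply, ← map_mul]
      refine Fintype.sum_equiv (MulAut.conj h⁻¹).toEquiv _ _ fun x => ?_
      have := hf x⁻¹ h⁻¹
      simp_all [mul_assoc]
  obtain ⟨c, hc⟩ :=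
    (Representation.IsIrreducible.algebraMap_intertwiningMap_bijective_of_isAlgClosed
      (ρ := ρ)).2 T
  have hT : ∑ g, f g⁻¹ • ρ g = c • LinearMap.id := congrArg (·.toLinearMap) hc.symm
  have htrace : LinearMap.trace ℂ V (∑ g, f g⁻¹ • ρ g) = 0 := by
    rw [cfInner, mul_eq_zero, inv_eq_zero, Nat.cast_eq_zero] at h
    calc LinearMap.trace ℂ V (∑ g, f g⁻¹ • ρ g) = ∑ g, f g⁻¹ * ρ.character g := by
          simp [map_sum, Representation.character]
      _ = ∑ g, f g * starRingEnd ℂ (ρ.character g) := by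
          rw [← Equiv.sum_comp (Equiv.inv G)]
          simp [star_character]
      _ = 0 := h.resolve_left Fintype.card_ne_zero
  have : Nontrivial V := IsSimpleModule.nontrivial ℂ[G] ρ.asModule
  rw [hT, map_smul, LinearMap.trace_id, smul_eq_mul, mul_eq_zero] at htrace
  rw [hT, htrace.resolve_right (Nat.cast_ne_zero.mpr finrank_pos.ne'), zero_smul]

theorem eq_zero_of_forall_cfInner_eq_zero {f : G → ℂ} (hf : IsClassFun f)
    (h : ∀ χ, IsIrrChar G χ → cfInner G f χ = 0) : f = 0 := by
  let z : ℂ[G] := ∑ g, f g⁻¹ • MonoidAlgebra.of ℂ G g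
  have hsimple : ∀ S : Submodule ℂ[G] ℂ[G], IsSimpleModule ℂ[G] S → ∀ x ∈ S, z * x = 0 := by
    intro S _ x hx
    let ρ := Representation.ofModule' (k := ℂ) (G := G) S
    have : ρ.IsIrreducible := isIrreducible_ofModule'
    have hρ : ∀ g, (ρ g ⟨x, hx⟩ : ℂ[G]) = MonoidAlgebra.of ℂ G g * x := fun g => by
      rw [ofModule'_apply]
      rfl
    have hz := congrArg Subtype.val (LinearMap.congr_fun
      (sum_smul_eq_zero_of_cfInner_eq_zero ρ hf (h _ (isIrrChar_character ρ))) ⟨x, hx⟩)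
    simp only [LinearMap.coe_sum, Finset.sum_apply, LinearMap.smul_apply, Submodule.coe_sum,
      Submodule.coe_smul_of_tower, hρ, LinearMap.zero_apply, ZeroMemClass.coe_zero] at hz
    simpa [z, Finset.sum_mul, ← smul_mul_assoc] using hz
  have hz : z = 0 := by
    have h1 : (1 : ℂ[G]) ∈ ⨆ S : {S : Submodule ℂ[G] ℂ[G] | IsSimpleModule ℂ[G] S}, S.1 := by
      rw [← sSup_eq_iSup', IsSemisimpleModule.sSup_simples_eq_top]
      trivial
    simpa using Submodule.iSup_induction _ (motive := fun x => z * x = 0) h1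
      (fun S => hsimple S.1 S.2) (mul_zero z) fun x y hx hy => by rw [mul_add, hx, hy, add_zero]
  funext g
  simpa [z, MonoidAlgebra.coeff_sum, Finsupp.single_apply, inv_eq_iff_eq_inv] using
    congrArg (fun a : ℂ[G] => a.coeff g⁻¹) hz

end FiniteGroup

section CfInner
variable {Γ : Type} [Group Γ] [Fintype Γ]

theorem cfInner_sub_left (u w v : Γ → ℂ) :
    cfInner Γ (fun x => u x - w x) v = cfInner Γ u v - cfInner Γ w v := by
  simp only [cfInner, sub_mul, Finset.sum_sub_distrib, mul_sub]

theorem cfInner_sum_mul_left {ι : Type*} (s : Finset ι) (a : ι → ℂ) (u : ι → Γ → ℂ)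
    (v : Γ → ℂ) :
    cfInner Γ (fun x => ∑ i ∈ s, a i * u i x) v = ∑ i ∈ s, a i * cfInner Γ (u i) v := by
  simp only [cfInner, Finset.sum_mul, Finset.mul_sum]
  rw [Finset.sum_comm]
  exact Finset.sum_congr rfl fun i _ => Finset.sum_congr rfl fun x _ => by ring

theorem cfInner_indHom {K : Type} [Group K] [Fintype K] (φ : K →* Γ) {a : Γ → ℂ}
    (ha : IsClassFun a) (ψ : K → ℂ) :
    cfInner Γ a (indHom φ ψ) = cfInner K (a ∘ φ) ψ := by
  have hconj : ∀ x y, ∑ g : Γ, (if φ y = x⁻¹ * g * x then a g else 0) = a (φ y) := by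
    intro x y
    have hiff : ∀ g, φ y = x⁻¹ * g * x ↔ g = x * φ y * x⁻¹ := fun g => by
      constructor <;> intro h <;> rw [h] <;> group
    simp only [hiff, Finset.sum_ite_eq', Finset.mem_univ, if_true]
    exact ha _ _
  calc cfInner Γ a (indHom φ ψ)
      = (Fintype.card Γ : ℂ)⁻¹ * (Fintype.card K : ℂ)⁻¹ * ∑ x : Γ, ∑ y : K,
          (∑ g : Γ, if φ y = x⁻¹ * g * x then a g else 0) * starRingEnd ℂ (ψ y) := by
        simp only [cfInner, indHom, map_mul, map_inv₀, map_natCast, map_sum, apply_ite,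
          map_zero, Finset.mul_sum, Finset.sum_mul, ite_mul, zero_mul]
        rw [Finset.sum_comm]
        refine Finset.sum_congr rfl fun x _ => Finset.sum_comm.trans ?_
        refine Finset.sum_congr rfl fun y _ => Finset.sum_congr rfl fun g _ => ?_
        split_ifs <;> ring
    _ = cfInner K (a ∘ φ) ψ := by
        simp only [hconj, Finset.sum_const, Finset.card_univ, nsmul_eq_mul, cfInner,
          Function.comp_apply]
        field_simp

end CfInner

section Product
variable {G₁ G₂ : Type} [Group G₁] [Fintype G₁] [Group G₂] [Fintype G₂]

theorem cfInner_prod (u₁ v₁ : G₁ → ℂ) (u₂ v₂ : G₂ → ℂ) :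
    cfInner (G₁ × G₂) (fun q => u₁ q.1 * u₂ q.2) (fun q => v₁ q.1 * v₂ q.2) =
      cfInner G₁ u₁ v₁ * cfInner G₂ u₂ v₂ := by
  rw [cfInner, cfInner, cfInner, Fintype.card_prod, Nat.cast_mul, mul_inv, Fintype.sum_prod_type,
    mul_mul_mul_comm, Finset.sum_mul_sum]
  congr 1
  exact Finset.sum_congr rfl fun g₁ _ => Finset.sum_congr rfl fun g₂ _ => by rw [map_mul]; ring

theorem cfInner_prod_of_isIrrChar {b b' : G₁ → ℂ} {c c' : G₂ → ℂ} (hb : IsIrrChar G₁ b)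
    (hb' : IsIrrChar G₁ b') (hc : IsIrrChar G₂ c) (hc' : IsIrrChar G₂ c') :
    cfInner (G₁ × G₂) (fun q => b q.1 * c q.2) (fun q => b' q.1 * c' q.2) =
      if (b, c) = (b', c') then 1 else 0 := by
  rw [cfInner_prod, cfInner_eq_ite_of_isIrrChar hb hb', cfInner_eq_ite_of_isIrrChar hc hc']
  by_cases hbb : b = b' <;> by_cases hcc : c = c' <;> simp [hbb, hcc]

theorem eq_zero_of_forall_cfInner_prod_eq_zero {F : G₁ × G₂ → ℂ} (hF : IsClassFun F)
    (h : ∀ b c, IsIrrChar G₁ b → IsIrrChar G₂ c →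
      cfInner (G₁ × G₂) F (fun q => b q.1 * c q.2) = 0) : F = 0 := by
  have hpartial : ∀ c, IsIrrChar G₂ c →
      (fun g₁ => ∑ g₂, F (g₁, g₂) * starRingEnd ℂ (c g₂)) = 0 := by
    refine fun c hc => eq_zero_of_forall_cfInner_eq_zero (fun g₁ h₁ => ?_) fun b hb => ?_
    · simpa using Finset.sum_congr rfl fun g₂ _ =>
        congrArg (· * starRingEnd ℂ (c g₂)) (hF (g₁, g₂) (h₁, 1))
    · have hcard : (Fintype.card G₂ : ℂ) ≠ 0 := Nat.cast_ne_zero.mpr Fintype.card_ne_zero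
      have key : cfInner G₁ (fun g₁ => ∑ g₂, F (g₁, g₂) * starRingEnd ℂ (c g₂)) b =
          Fintype.card G₂ * cfInner (G₁ × G₂) F (fun q => b q.1 * c q.2) := by
        simp only [cfInner, Fintype.card_prod, Nat.cast_mul, mul_inv, Fintype.sum_prod_type,
          map_mul, Finset.sum_mul, Finset.mul_sum]
        refine Finset.sum_congr rfl fun g₁ _ => Finset.sum_congr rfl fun g₂ _ => ?_
        field_simp
      rw [key, h b c hb hc, mul_zero]
  funext ⟨g₁, g₂⟩
  refine congrFun (eq_zero_of_forall_cfInner_eq_zero (f := fun g₂ => F (g₁, g₂))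
    (fun g₂ h₂ => by simpa using hF (g₁, g₂) (1, h₂)) fun c hc => ?_) g₂
  rw [cfInner, congrFun (hpartial c hc) g₁, Pi.zero_apply, mul_zero]

theorem eq_sum_cfInner_mul_of_isClassFun (B₁ : Finset (G₁ → ℂ)) (B₂ : Finset (G₂ → ℂ))
    (hB₁ : ∀ χ, χ ∈ B₁ ↔ IsIrrChar G₁ χ) (hB₂ : ∀ χ, χ ∈ B₂ ↔ IsIrrChar G₂ χ)
    {f : G₁ × G₂ → ℂ} (hf : IsClassFun f) (q : G₁ × G₂) :
    f q = ∑ b ∈ B₁, ∑ c ∈ B₂,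
      cfInner (G₁ × G₂) f (fun r => b r.1 * c r.2) * (b q.1 * c q.2) := by
  let box : (G₁ → ℂ) × (G₂ → ℂ) → G₁ × G₂ → ℂ := fun p r => p.1 r.1 * p.2 r.2
  let F : G₁ × G₂ → ℂ := fun r => f r - ∑ p ∈ B₁ ×ˢ B₂, cfInner (G₁ × G₂) f (box p) * box p r
  have hF : F = 0 := by
    refine eq_zero_of_forall_cfInner_prod_eq_zero (fun g h => ?_) fun b c hb hc => ?_
    · have hbox : ∀ p ∈ B₁ ×ˢ B₂, box p (h * g * h⁻¹) = box p g := fun p hp => by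
        rw [Finset.mem_product, hB₁, hB₂] at hp
        simp only [box, Prod.fst_mul, Prod.snd_mul, Prod.fst_inv, Prod.snd_inv,
          hp.1.isClassFun _ _, hp.2.isClassFun _ _]
      simp only [F, hf g h]
      rw [Finset.sum_congr rfl fun p hp => by rw [hbox p hp]]
    · have hortho : ∀ p ∈ B₁ ×ˢ B₂, cfInner (G₁ × G₂) (box p) (box (b, c)) =
          if p = (b, c) then 1 else 0 := fun p hp => by
        rw [Finset.mem_product, hB₁, hB₂] at hp
        exact cfInner_prod_of_isIrrChar hp.1 hb hp.2 hc
      rw [cfInner_sub_left, cfInner_sum_mul_left, Finset.sum_congr rfl fun p hp => by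
        rw [hortho p hp]]
      simp only [mul_ite, mul_one, mul_zero, Finset.sum_ite_eq']
      rw [if_pos (Finset.mem_product.mpr ⟨(hB₁ b).mpr hb, (hB₂ c).mpr hc⟩)]
      exact sub_self _
  simpa [F, sub_eq_zero, Finset.sum_product, box] using congrFun hF q

end Product

theorem statement14_general (H : Type) [CommGroup H] (k j : ℕ)
    (a : Equiv.Perm (Fin k) → ℂ) (ha : IsIrrChar (Equiv.Perm (Fin k)) a)
    (B : ∀ m : ℕ, Finset (Equiv.Perm (Fin m) → ℂ))
    (hB : ∀ (m : ℕ) (χ : Equiv.Perm (Fin m) → ℂ),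
      χ ∈ B m ↔ IsIrrChar (Equiv.Perm (Fin m)) χ)
    (E : Fin j ⊕ Fin (k - j) ≃ Fin k) :
    (fun x : Wr H j × Wr H (k - j) => permCF a (wrSumEmb E x)) =
      fun x : Wr H j × Wr H (k - j) =>
        ∑ b ∈ B j, ∑ c ∈ B (k - j),
          cfInner (Equiv.Perm (Fin k)) a
              (indHom (permSumEmb E) fun q => b q.1 * c q.2) *
            (permCF b x.1 * permCF c x.2) := by
  funext x
  have hres : IsClassFun (a ∘ permSumEmb E) := fun g h => by
    simp only [Function.comp_apply, map_mul, map_inv, ha.isClassFun _ _]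
  rw [show permCF a (wrSumEmb E x) = (a ∘ permSumEmb E) (x.1.right, x.2.right) from rfl,
    eq_sum_cfInner_mul_of_isClassFun (B j) (B (k - j)) (hB j) (hB (k - j)) hres]
  refine Finset.sum_congr rfl fun b _ => Finset.sum_congr rfl fun c _ => ?_
  rw [cfInner_indHom _ ha.isClassFun]
  rfl

/-- Let `H` be a finite abelian group, `k ≥ 1`, `0 ≤ j ≤ k`, and let `a`
be an irreducible character of `S_k`.  Then the restriction to `H_j × H_{k−j}` of the
class function `ζ_a` on `H_k = H ≀ S_k` decomposes as
`Res^{H_k}_{H_j × H_{k−j}}(ζ_a) = ∑_{b ∈ Irr(S_j)} ∑_{c ∈ Irr(S_{k−j})} c^a_{b,c} ⬝ (ζ_b ⊠ ζ_c)`,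
where `c^a_{b,c} = ⟨a, Ind_{S_j × S_{k−j}}^{S_k}(b ⊠ c)⟩` is the Littlewood–Richardson
coefficient.  (The subgroups `H_j × H_{k−j} ≤ H_k` and `S_j × S_{k−j} ≤ S_k` are
realised via the identification `E` of `Fin k` with the two consecutive blocks of sizes
`j`, `k − j`; `B m` is the set of irreducible characters of `S_m`.) -/
theorem statement14 (H : Type) [CommGroup H] [Fintype H] (k j : ℕ) (hk : 1 ≤ k)
    (hj : j ≤ k)
    (a : Equiv.Perm (Fin k) → ℂ) (ha : IsIrrChar (Equiv.Perm (Fin k)) a)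
    (B : ∀ m : ℕ, Finset (Equiv.Perm (Fin m) → ℂ))
    (hB : ∀ (m : ℕ) (χ : Equiv.Perm (Fin m) → ℂ),
      χ ∈ B m ↔ IsIrrChar (Equiv.Perm (Fin m)) χ)
    (E : Fin j ⊕ Fin (k - j) ≃ Fin k)
    (hEl : ∀ s : Fin j, (E (Sum.inl s) : ℕ) = (s : ℕ))
    (hEr : ∀ t : Fin (k - j), (E (Sum.inr t) : ℕ) = j + (t : ℕ)) :
    (fun x : Wr H j × Wr H (k - j) => permCF a (wrSumEmb E x)) =
      fun x : Wr H j × Wr H (k - j) =>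
        ∑ b ∈ B j, ∑ c ∈ B (k - j),
          cfInner (Equiv.Perm (Fin k)) a
              (indHom (permSumEmb E) fun q => b q.1 * c q.2) *
            (permCF b x.1 * permCF c x.2) :=
  statement14_general H k j a ha B hB E

end BrGrFormal
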